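/- The Bargmann transform of the k-th Hermite function is the normalized monomial: 𝓑h_k(z) = z^k / √(k!) for all z ∈ ℂ, where 𝓑s(z) = π^{-1/4} e^{-z²/2} ∫_ℝ s(t) exp(√2 t z − t²/2) dt. -/

import Mathlib

open MeasureTheory Real Complex Polynomial

noncomputable def gss (k : ℕ) : ℝ → ℝ := iteratedDeriv k (fun x : ℝ => Real.exp (-x ^ 2))

lemma contDiff_gauss : ContDiff ℝ (⊤ : ℕ∞) (fun x : ℝ => Real.exp (-x ^ 2)) := by
  exact (Real.contDiff_exp.comp ((contDiff_id.pow 2).neg))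

lemma gss_hasDerivAt (k : ℕ) (t : ℝ) : HasDerivAt (gss k) (gss (k+1) t) t := by
  have h1 : Differentiable ℝ (gss k) :=
    contDiff_gauss.differentiable_iteratedDeriv k (by exact_mod_cast lt_top_iff_ne_top.2 (by simp))
  have := (h1 t).hasDerivAt
  rwa [show gss (k+1) t = deriv (gss k) t from by rw [gss, gss, iteratedDeriv_succ]]

lemma gss_poly (k : ℕ) : ∃ p : Polynomial ℝ, ∀ t, gss k t = p.eval t * Real.exp (-t ^ 2) := by
  induction k with
  | zero => exact ⟨1, fun t => by simp [gss]⟩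
  | succ n ih =>
    obtain ⟨p, hp⟩ := ih
    refine ⟨p.derivative - Polynomial.C 2 * Polynomial.X * p, fun t => ?_⟩
    have : gss (n+1) t = deriv (gss n) t := by rw [gss, gss, iteratedDeriv_succ]
    rw [this]
    have h2 : deriv (gss n) t = deriv (fun s => p.eval s * Real.exp (-s ^ 2)) t := by
      congr 1; ext s; exact hp s
    rw [h2]
    have h3 : HasDerivAt (fun s : ℝ => p.eval s * Real.exp (-s ^ 2))
        (p.derivative.eval t * Real.exp (-t ^ 2) + p.eval t * (Real.exp (-t ^ 2) * (-(2*t)))) t := by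
      have hp' := p.hasDerivAt t
      have he : HasDerivAt (fun s : ℝ => Real.exp (-s ^ 2)) (Real.exp (-t ^ 2) * (-(2*t))) t := by
        have : HasDerivAt (fun s : ℝ => -s ^ 2) (-(2*t)) t := by
          simpa [Pi.neg_def] using ((hasDerivAt_pow 2 t).neg)
        exact (Real.hasDerivAt_exp _).comp t this
      exact hp'.mul he
    rw [h3.deriv]
    simp [Polynomial.eval_mul, Polynomial.eval_sub]
    ring

lemma integrable_pow_gauss (n : ℕ) (c : ℂ) :
    Integrable (fun t : ℝ => (t : ℂ) ^ n * Complex.exp (c * t - (t:ℝ) ^ 2)) := by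
  have hmeas : AEStronglyMeasurable (fun t : ℝ => (t : ℂ) ^ n * Complex.exp (c * t - (t:ℝ) ^ 2)) volume := by
    apply Continuous.aestronglyMeasurable
    continuity
  set K : ℝ := n.factorial * Real.exp ((1 + |c.re|) ^ 2 / 2) with hK
  have hint : Integrable (fun t : ℝ => K * Real.exp (-(1/2) * t ^ 2)) :=
    (integrable_exp_neg_mul_sq (by norm_num)).const_mul K
  refine hint.mono' hmeas ?_
  filter_upwards with t
  rw [norm_mul, Complex.norm_exp]
  simp only [norm_pow]
  rw [Complex.norm_real, Real.norm_eq_abs]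
  have hre : (c * t - (t:ℝ) ^ 2 : ℂ).re = c.re * t - t ^ 2 := by
    simp [Complex.sub_re, Complex.mul_re, ← Complex.ofReal_pow]
  rw [hre]
  have hb1 : |t| ^ n ≤ n.factorial * Real.exp |t| := by
    have := Real.pow_div_factorial_le_exp (x := |t|) (abs_nonneg t) n
    rw [div_le_iff₀ (by positivity)] at this
    linarith [this]
  have hb2 : c.re * t ≤ |c.re| * |t| := by
    calc c.re * t ≤ |c.re * t| := le_abs_self _
    _ = |c.re| * |t| := abs_mul _ _
  calc |t| ^ n * Real.exp (c.re * t - t ^ 2)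
      ≤ (n.factorial * Real.exp |t|) * Real.exp (|c.re| * |t| - t ^ 2) := by
        apply mul_le_mul hb1 (Real.exp_le_exp.2 (by linarith)) (Real.exp_pos _).le (by positivity)
    _ = n.factorial * Real.exp ((1 + |c.re|) * |t| - t ^ 2) := by
        rw [mul_assoc, ← Real.exp_add]; ring_nf
    _ ≤ K * Real.exp (-(1/2) * t ^ 2) := by
        rw [hK, mul_assoc, ← Real.exp_add]
        apply mul_le_mul_of_nonneg_left (Real.exp_le_exp.2 ?_) (by positivity)
        have hsq : (1 + |c.re|) * |t| ≤ t ^ 2 / 2 + (1 + |c.re|) ^ 2 / 2 := by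
          nlinarith [sq_nonneg (|t| - (1 + |c.re|)), _root_.sq_abs t]
        nlinarith [_root_.sq_abs t]

lemma integrable_poly_gauss (p : Polynomial ℝ) (c : ℂ) :
    Integrable (fun t : ℝ => ((p.eval t : ℝ) : ℂ) * Complex.exp (c * t - (t:ℝ) ^ 2)) := by
  have : (fun t : ℝ => ((p.eval t : ℝ) : ℂ) * Complex.exp (c * t - (t:ℝ) ^ 2)) =
      fun t : ℝ => ∑ i ∈ Finset.range (p.natDegree + 1),
        (p.coeff i : ℂ) * ((t : ℂ) ^ i * Complex.exp (c * t - (t:ℝ) ^ 2)) := by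
    ext t
    rw [show p.eval t = ∑ i ∈ Finset.range (p.natDegree+1), p.coeff i * t ^ i from
      Polynomial.eval_eq_sum_range t]
    push_cast
    rw [Finset.sum_mul]
    congr 1; ext i; ring
  rw [this]
  exact integrable_finset_sum _ fun i _ => ((integrable_pow_gauss i c).const_mul _)

lemma integrable_gss_mul (k : ℕ) (c : ℂ) :
    Integrable (fun t : ℝ => ((gss k t : ℝ) : ℂ) * Complex.exp (c * t)) := by
  obtain ⟨p, hp⟩ := gss_poly k
  have heq : (fun t : ℝ => ((gss k t : ℝ) : ℂ) * Complex.exp (c * t)) =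
      fun t : ℝ => ((p.eval t : ℝ) : ℂ) * Complex.exp (c * t - (t:ℝ) ^ 2) := by
    ext t
    rw [hp t]
    push_cast
    rw [sub_eq_add_neg, Complex.exp_add]
    ring
  rw [heq]
  exact integrable_poly_gauss p c

lemma key_integral (k : ℕ) (z : ℂ) :
    (∫ t : ℝ, ((gss k t : ℝ) : ℂ) * Complex.exp ((Real.sqrt 2 * z) * t))
      = (-(Real.sqrt 2 * z)) ^ k * ((Real.sqrt Real.pi : ℂ) * Complex.exp (z ^ 2 / 2)) := by
  set c : ℂ := (Real.sqrt 2 : ℂ) * z with hc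
  induction k with
  | zero =>
    have h0 : ∀ t : ℝ, ((gss 0 t : ℝ) : ℂ) * Complex.exp (c * t)
        = Complex.exp ((-1) * (t:ℂ) ^ 2 + c * t + 0) := by
      intro t
      rw [show gss 0 t = Real.exp (-t ^ 2) from by rw [gss, iteratedDeriv_zero]]
      push_cast
      rw [← Complex.exp_add]
      congr 1
      ring
    rw [show (∫ t : ℝ, ((gss 0 t : ℝ) : ℂ) * Complex.exp (c * t))
        = ∫ t : ℝ, Complex.exp ((-1) * (t:ℂ) ^ 2 + c * t + 0) from by
          exact integral_congr_ae (Filter.Eventually.of_forall h0)]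
    rw [integral_cexp_quadratic (by norm_num) c 0]
    have hsq : c ^ 2 = 2 * z ^ 2 := by
      rw [hc, mul_pow]
      norm_cast
      rw [Real.sq_sqrt (by norm_num : (0:ℝ) ≤ 2)]
      norm_num
    have hpow : ((Real.pi : ℂ) / -(-1)) ^ (1/2 : ℂ) = ((Real.sqrt Real.pi : ℝ) : ℂ) := by
      rw [Real.sqrt_eq_rpow, Complex.ofReal_cpow Real.pi_pos.le]
      norm_num
    rw [hpow, hsq]
    rw [show (0 : ℂ) - 2 * z ^ 2 / (4 * (-1)) = z ^ 2 / 2 from by ring]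
    simp
  | succ n ih =>
    have hu : ∀ t : ℝ, HasDerivAt (fun t : ℝ => Complex.exp (c * t))
        (c * Complex.exp (c * t)) t := by
      intro t
      have h0 : HasDerivAt (fun y : ℝ => c * (y : ℂ)) c t := by
        simpa using ((hasDerivAt_id t).ofReal_comp).const_mul c
      simpa [mul_comm] using h0.cexp
    have hv : ∀ t : ℝ, HasDerivAt (fun t : ℝ => ((gss n t : ℝ) : ℂ))
        ((gss (n+1) t : ℝ) : ℂ) t := fun t => (gss_hasDerivAt n t).ofReal_comp
    have huv' : Integrable (fun t : ℝ =>
        Complex.exp (c * t) * ((gss (n+1) t : ℝ) : ℂ)) :=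
      (integrable_gss_mul (n+1) c).congr
        (Filter.Eventually.of_forall fun t => by ring)
    have hu'v : Integrable (fun t : ℝ =>
        (c * Complex.exp (c * t)) * ((gss n t : ℝ) : ℂ)) :=
      ((integrable_gss_mul n c).const_mul c).congr
        (Filter.Eventually.of_forall fun t => by ring)
    have huv : Integrable (fun t : ℝ =>
        Complex.exp (c * t) * ((gss n t : ℝ) : ℂ)) :=
      (integrable_gss_mul n c).congr
        (Filter.Eventually.of_forall fun t => by ring)
    have hparts := MeasureTheory.integral_mul_deriv_eq_deriv_mul_of_integrable
      (fun t _ => hu t) (fun t _ => hv t) huv' hu'v huv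
    calc (∫ t : ℝ, ((gss (n+1) t : ℝ) : ℂ) * Complex.exp (c * t))
        = ∫ t : ℝ, Complex.exp (c * t) * ((gss (n+1) t : ℝ) : ℂ) := by
          exact integral_congr_ae (Filter.Eventually.of_forall fun t => by ring)
      _ = - ∫ t : ℝ, (c * Complex.exp (c * t)) * ((gss n t : ℝ) : ℂ) := hparts
      _ = - ∫ t : ℝ, c * (((gss n t : ℝ) : ℂ) * Complex.exp (c * t)) := by
          congr 1
          exact integral_congr_ae (Filter.Eventually.of_forall fun t => by ring)
      _ = -(c * ∫ t : ℝ, ((gss n t : ℝ) : ℂ) * Complex.exp (c * t)) := by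
          rw [MeasureTheory.integral_const_mul]
      _ = (-c) ^ (n+1) * ((Real.sqrt Real.pi : ℂ) * Complex.exp (z ^ 2 / 2)) := by
          rw [ih]; ring

lemma sqrt_two_pow (k : ℕ) : Real.sqrt (2 ^ k) = Real.sqrt 2 ^ k := by
  rw [show (2:ℝ) ^ k = (Real.sqrt 2 ^ k) ^ 2 from by
    rw [← pow_mul, mul_comm, pow_mul, Real.sq_sqrt (by norm_num : (0:ℝ) ≤ 2)]]
  exact Real.sqrt_sq (by positivity)

lemma const_eq (k : ℕ) :
    Real.pi ^ (-(1/4 : ℝ)) *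
      ((-1:ℝ) ^ k / Real.sqrt (Real.sqrt Real.pi * 2 ^ k * (Nat.factorial k : ℝ))) *
      ((-1:ℝ) ^ k * Real.sqrt 2 ^ k * Real.sqrt Real.pi)
    = 1 / Real.sqrt (Nat.factorial k) := by
  have hfac : (0:ℝ) < (Nat.factorial k : ℝ) := by positivity
  have h1 : Real.sqrt (Real.sqrt Real.pi * 2 ^ k * (Nat.factorial k : ℝ))
      = Real.pi ^ (1/4 : ℝ) * Real.sqrt 2 ^ k * Real.sqrt (Nat.factorial k) := by
    rw [Real.sqrt_mul (by positivity), Real.sqrt_mul (Real.sqrt_nonneg _), sqrt_two_pow]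
    congr 1
    rw [Real.sqrt_eq_rpow, Real.sqrt_eq_rpow, ← Real.rpow_natCast,
      ← Real.rpow_mul Real.pi_pos.le]
    norm_num
  rw [h1]
  have hsign : (-1:ℝ) ^ k * (-1:ℝ) ^ k = 1 := by
    rw [← pow_add]
    exact Even.neg_one_pow ⟨k, rfl⟩
  have hp1 : (0:ℝ) < Real.pi ^ (1/4 : ℝ) := Real.rpow_pos_of_pos Real.pi_pos _
  have hp2 : (0:ℝ) < Real.sqrt 2 ^ k := by positivity
  have hp3 : (0:ℝ) < Real.sqrt (Nat.factorial k) := Real.sqrt_pos.2 hfac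
  have hpi : Real.pi ^ (-(1/4:ℝ)) * Real.sqrt Real.pi = Real.pi ^ (1/4:ℝ) := by
    rw [Real.sqrt_eq_rpow, ← Real.rpow_add Real.pi_pos]
    norm_num
  rw [eq_div_iff hp3.ne']
  have expand : Real.pi ^ (-(1/4:ℝ)) * ((-1:ℝ)^k / (Real.pi ^ (1/4:ℝ) * Real.sqrt 2 ^ k
      * Real.sqrt (Nat.factorial k))) * ((-1:ℝ)^k * Real.sqrt 2 ^ k * Real.sqrt Real.pi)
      * Real.sqrt (Nat.factorial k)
      = (((-1:ℝ)^k * (-1:ℝ)^k) * (Real.pi ^ (-(1/4:ℝ)) * Real.sqrt Real.pi) * Real.sqrt 2 ^ k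
        * Real.sqrt (Nat.factorial k)) / (Real.pi ^ (1/4:ℝ) * Real.sqrt 2 ^ k
        * Real.sqrt (Nat.factorial k)) := by ring
  rw [expand, hsign, hpi, one_mul]
  rw [div_eq_iff (by positivity)]
  ring

/-- The `k`-th Hermite function, via the Rodrigues formula. -/
noncomputable def hermiteFun (k : ℕ) (t : ℝ) : ℝ :=
  ((-1 : ℝ) ^ k / Real.sqrt (Real.sqrt Real.pi * 2 ^ k * Nat.factorial k)) *
    Real.exp (t ^ 2 / 2) * iteratedDeriv k (fun x : ℝ => Real.exp (-x ^ 2)) t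

/-- The Bargmann transform `𝓑s(z) = π^{-1/4} e^{-z²/2} ∫ s(t) exp(√2 t z − t²/2) dt`. -/
noncomputable def bargmann (s : ℝ → ℂ) (z : ℂ) : ℂ :=
  ((Real.pi ^ (-(1 / 4 : ℝ)) : ℝ) : ℂ) * Complex.exp (-z ^ 2 / 2) *
    ∫ t : ℝ, s t * Complex.exp (Real.sqrt 2 * t * z - (t : ℂ) ^ 2 / 2)

/-- the Bargmann transform of the `k`-th Hermite function is the
normalized monomial `𝓑h_k(z) = z^k / √(k!)`. -/
theorem bargmann_hermite (k : ℕ) (z : ℂ) :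
    bargmann (fun t => (hermiteFun k t : ℂ)) z
      = z ^ k / (Real.sqrt (Nat.factorial k) : ℂ) := by
  set C : ℝ := (-1 : ℝ) ^ k / Real.sqrt (Real.sqrt Real.pi * 2 ^ k * Nat.factorial k) with hC
  have hpt : ∀ t : ℝ, ((hermiteFun k t : ℝ) : ℂ)
        * Complex.exp (Real.sqrt 2 * t * z - (t : ℂ) ^ 2 / 2)
      = (C : ℂ) * (((gss k t : ℝ) : ℂ)
        * Complex.exp (((Real.sqrt 2 : ℝ) : ℂ) * z * t)) := by
    intro t
    simp only [hermiteFun, gss]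
    push_cast
    rw [show Complex.exp (((Real.sqrt 2 : ℝ) : ℂ) * z * t)
        = Complex.exp ((t:ℂ) ^ 2 / 2)
          * Complex.exp (((Real.sqrt 2 : ℝ) : ℂ) * t * z - (t:ℂ) ^ 2 / 2) from by
      rw [← Complex.exp_add]; congr 1; ring]
    rw [hC]
    push_cast
    ring
  have hint : (∫ t : ℝ, ((hermiteFun k t : ℝ) : ℂ)
        * Complex.exp (Real.sqrt 2 * t * z - (t : ℂ) ^ 2 / 2))
      = (C : ℂ) * ((-(((Real.sqrt 2 : ℝ) : ℂ) * z)) ^ k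
        * (((Real.sqrt Real.pi : ℝ) : ℂ) * Complex.exp (z ^ 2 / 2))) := by
    rw [integral_congr_ae (Filter.Eventually.of_forall hpt),
      MeasureTheory.integral_const_mul, key_integral]
  rw [bargmann]
  rw [hint]
  have hexp : Complex.exp (-z ^ 2 / 2) * Complex.exp (z ^ 2 / 2) = 1 := by
    rw [← Complex.exp_add, show -z ^ 2 / 2 + z ^ 2 / 2 = 0 from by ring, Complex.exp_zero]
  have hcoef : ((Real.pi ^ (-(1 / 4 : ℝ)) : ℝ) : ℂ) * (C : ℂ)
      * ((-1 : ℂ) ^ k * (((Real.sqrt 2 : ℝ) : ℂ)) ^ k * ((Real.sqrt Real.pi : ℝ) : ℂ))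
      = 1 / ((Real.sqrt (Nat.factorial k) : ℝ) : ℂ) := by
    have h := const_eq k
    rw [hC]
    push_cast
    exact_mod_cast congrArg (Complex.ofReal) h
  have hneg : (-(((Real.sqrt 2 : ℝ) : ℂ) * z)) ^ k
      = (-1 : ℂ) ^ k * (((Real.sqrt 2 : ℝ) : ℂ)) ^ k * z ^ k := by
    rw [neg_pow, mul_pow]; ring
  rw [hneg]
  calc ((Real.pi ^ (-(1 / 4 : ℝ)) : ℝ) : ℂ) * Complex.exp (-z ^ 2 / 2)
        * ((C : ℂ) * ((-1 : ℂ) ^ k * (((Real.sqrt 2 : ℝ) : ℂ)) ^ k * z ^ k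
          * (((Real.sqrt Real.pi : ℝ) : ℂ) * Complex.exp (z ^ 2 / 2))))
      = (((Real.pi ^ (-(1 / 4 : ℝ)) : ℝ) : ℂ) * (C : ℂ)
          * ((-1 : ℂ) ^ k * (((Real.sqrt 2 : ℝ) : ℂ)) ^ k * ((Real.sqrt Real.pi : ℝ) : ℂ)))
        * (Complex.exp (-z ^ 2 / 2) * Complex.exp (z ^ 2 / 2)) * z ^ k := by ring
    _ = (1 / ((Real.sqrt (Nat.factorial k) : ℝ) : ℂ)) * 1 * z ^ k := by rw [hcoef, hexp]
    _ = z ^ k / ((Real.sqrt (Nat.factorial k) : ℝ) : ℂ) := by ring
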